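/- arXiv:2009.06723 — 2 statements merged into one kernel-verified Lean document; each statement's English description precedes it below -/
import Mathlib

section
/- The graph-adaptive max activation function is Lipschitz stable in the infinity norm: if z and z̃ denote its outputs on inputs x and x̃ respectively, then ‖z̃ − z‖_∞ ≤ (|β| + K·C·max_{1≤k≤K} ‖S^k‖_∞) · ‖x̃ − x‖_∞. -/
/-!
Coordinatewise, `zt i - z i` is `β` times a difference of ReLUs, which is `1`-Lipschitz, plus the
terms `h k` times a difference of neighbourhood maxima. A maximum over a finite set is `1`-Lipschitz
for the sup norm, so the `k`-th difference is at most `‖S^k (xt - x)‖∞ ≤ ‖S^k‖∞ ‖xt - x‖∞`; the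
last inequality is Mathlib's, once `vnorm` and `mnorm` are identified with the sup norm on vectors
and the `ℓ∞` operator norm on matrices.
-/

open Matrix

/-- infinity norm of a vector -/
noncomputable def vnorm {N : ℕ} [NeZero N] (v : Fin N → ℝ) : ℝ :=
  Finset.univ.sup' Finset.univ_nonempty fun i => |v i|

/-- operator infinity norm of a matrix: maximum absolute row sum -/
noncomputable def mnorm {N : ℕ} [NeZero N] (A : Matrix (Fin N) (Fin N) ℝ) : ℝ :=
  Finset.univ.sup' Finset.univ_nonempty fun i => ∑ j, |A i j|

attribute [local instance] Matrix.linftyOpNormedAddCommGroup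

section NormBridge

variable {N : ℕ} [NeZero N]

theorem vnorm_eq_norm (v : Fin N → ℝ) : vnorm v = ‖v‖ := by
  rw [Pi.norm_def, ← Finset.sup'_eq_sup Finset.univ_nonempty,
    Finset.apply_sup'_eq_sup'_comp _ _ NNReal.coe_mono.map_sup]
  rfl

theorem mnorm_eq_linfty_opNorm (A : Matrix (Fin N) (Fin N) ℝ) : mnorm A = ‖A‖ := by
  rw [linfty_opNorm_def, ← Finset.sup'_eq_sup Finset.univ_nonempty,
    Finset.apply_sup'_eq_sup'_comp _ _ NNReal.coe_mono.map_sup]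
  simp [mnorm, Function.comp_def]

end NormBridge

theorem abs_max_zero_sub_max_zero_le (a b : ℝ) : |max 0 a - max 0 b| ≤ |a - b| := by
  rw [max_comm 0 a, max_comm 0 b]
  exact abs_max_sub_max_le_abs a b 0

section SupLipschitz

variable {ι : Type*} [Fintype ι] (s : Finset ι) (hs : s.Nonempty)

theorem Finset.sup'_le_sup'_add_norm_sub (f g : ι → ℝ) :
    s.sup' hs f ≤ s.sup' hs g + ‖f - g‖ :=
  Finset.sup'_le _ _ fun j hj => calc
    f j = g j + (f - g) j := by simp
    _ ≤ s.sup' hs g + ‖f - g‖ :=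
      add_le_add (s.le_sup' g hj) ((Real.le_norm_self _).trans (norm_le_pi_norm _ j))

theorem Finset.abs_sup'_sub_sup'_le_norm_sub (f g : ι → ℝ) :
    |s.sup' hs f - s.sup' hs g| ≤ ‖f - g‖ := by
  rw [abs_sub_le_iff, sub_le_iff_le_add', sub_le_iff_le_add']
  exact ⟨s.sup'_le_sup'_add_norm_sub hs f g,
    norm_sub_rev g f ▸ s.sup'_le_sup'_add_norm_sub hs g f⟩

theorem Finset.abs_sup'_mulVec_sub_sup'_mulVec_le {n : Type*} [Fintype n]
    (A : Matrix ι n ℝ) (x y : n → ℝ) :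
    |s.sup' hs (A *ᵥ x) - s.sup' hs (A *ᵥ y)| ≤ ‖A‖ * ‖x - y‖ := calc
  _ ≤ ‖A *ᵥ x - A *ᵥ y‖ := s.abs_sup'_sub_sup'_le_norm_sub hs _ _
  _ ≤ ‖A‖ * ‖x - y‖ := by rw [← mulVec_sub]; exact linfty_opNorm_mulVec A _

end SupLipschitz

theorem graph_adaptive_max_lipschitz (N K : ℕ) [NeZero N] [NeZero K]
    (S : Matrix (Fin N) (Fin N) ℝ)
    (Nb : Fin N → Finset (Fin N)) (hNb : ∀ i, (Nb i).Nonempty)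
    (β C : ℝ) (h : Fin K → ℝ) (hC : ∀ k, |h k| ≤ C)
    (x xt : Fin N → ℝ)
    (z zt : Fin N → ℝ)
    (hz : ∀ i, z i = β * max 0 (x i) +
      ∑ k : Fin K, h k * (Nb i).sup' (hNb i) (fun j => (S ^ ((k : ℕ) + 1) *ᵥ x) j))
    (hzt : ∀ i, zt i = β * max 0 (xt i) +
      ∑ k : Fin K, h k * (Nb i).sup' (hNb i) (fun j => (S ^ ((k : ℕ) + 1) *ᵥ xt) j)) :
    vnorm (zt - z) ≤
      (|β| + K * C * Finset.univ.sup' Finset.univ_nonempty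
        (fun k : Fin K => mnorm (S ^ ((k : ℕ) + 1)))) * vnorm (xt - x) := by
  set M := Finset.univ.sup' Finset.univ_nonempty fun k : Fin K => mnorm (S ^ ((k : ℕ) + 1))
  set d := vnorm (xt - x)
  have hC0 : 0 ≤ C := (abs_nonneg _).trans (hC 0)
  have hd : d = ‖xt - x‖ := vnorm_eq_norm _
  refine Finset.sup'_le _ _ fun i _ => ?_
  have hrelu : |max 0 (xt i) - max 0 (x i)| ≤ d :=
    (abs_max_zero_sub_max_zero_le _ _).trans (hd ▸ norm_le_pi_norm (xt - x) i)
  have hagg (k : Fin K) : |(Nb i).sup' (hNb i) (S ^ ((k : ℕ) + 1) *ᵥ xt) -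
      (Nb i).sup' (hNb i) (S ^ ((k : ℕ) + 1) *ᵥ x)| ≤ M * d := by
    refine ((Nb i).abs_sup'_mulVec_sub_sup'_mulVec_le _ _ _ _).trans ?_
    rw [← mnorm_eq_linfty_opNorm, ← hd]
    gcongr
    · exact hd ▸ norm_nonneg _
    · exact Finset.le_sup' (fun k : Fin K => mnorm (S ^ ((k : ℕ) + 1))) (Finset.mem_univ k)
  calc |(zt - z) i|
      = |β * (max 0 (xt i) - max 0 (x i)) + ∑ k : Fin K, h k *
          ((Nb i).sup' (hNb i) (S ^ ((k : ℕ) + 1) *ᵥ xt) -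
            (Nb i).sup' (hNb i) (S ^ ((k : ℕ) + 1) *ᵥ x))| := by
        rw [Pi.sub_apply, hz, hzt]
        simp only [mul_sub, Finset.sum_sub_distrib]
        congr 1
        ring
    _ ≤ |β| * d + ∑ _k : Fin K, C * (M * d) := by
        refine (abs_add_le _ _).trans (add_le_add ?_ ((Finset.abs_sum_le_sum_abs _ _).trans ?_))
        · rw [abs_mul]; gcongr
        · gcongr with k; rw [abs_mul]; gcongr; exacts [hC k, hagg k]
    _ = (|β| + K * C * M) * d := by
        simp only [Finset.sum_const, Finset.card_univ, Fintype.card_fin, nsmul_eq_mul]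
        ring
end

section
/- A single-layer GCNN with graph-adaptive max activation is permutation equivariant: Φ(Pᵀx; PᵀSP) = Pᵀ Φ(x; S), where Φ(x; S)_i = β·ReLU((H(S)x)_i) + Σ_{k=1}^{K} h_{σk}·max{ (S^k H(S)x)_j : j ∈ N_i }, and neighborhoods are relabeled consistently with the permutation. -/
open Matrix

/-- Neighborhood of node `i`: off-diagonal support of row `i` of the shift operator. -/
noncomputable def nbhd {N : ℕ} (S : Matrix (Fin N) (Fin N) ℝ) (i : Fin N) : Finset (Fin N) :=
  Finset.univ.filter (fun j => j ≠ i ∧ S i j ≠ 0)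

/-- Single-layer GCNN with graph-adaptive max activation. -/
noncomputable def Phi {N K : ℕ} (S : Matrix (Fin N) (Fin N) ℝ)
    (hne : ∀ i, (nbhd S i).Nonempty) (h : Fin (K + 1) → ℝ) (β : ℝ) (hσ : Fin K → ℝ)
    (x : Fin N → ℝ) : Fin N → ℝ := fun i =>
  β * max 0 ((∑ k : Fin (K + 1), h k • (S ^ (k : ℕ) *ᵥ x)) i) +
    ∑ k : Fin K, hσ k * (nbhd S i).sup' (hne i)
      (fun j => (S ^ ((k : ℕ) + 1) *ᵥ (∑ k' : Fin (K + 1), h k' • (S ^ (k' : ℕ) *ᵥ x))) j)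

/-!
Conjugation by a permutation matrix only relabels the nodes: `Pᵀ S P` is `S.submatrix σ⁻¹ σ⁻¹`,
which commutes with taking powers, and `Pᵀ x` is `x ∘ σ⁻¹`. The neighborhoods of the relabeled
graph are the images of the old ones under `σ`, so each maximum in `Φ` is taken over the same
values, and every term of `Φ` is relabeled in the same way.
-/

namespace Matrix

variable {m n R : Type*} [Fintype m] [DecidableEq m] [Fintype n] [DecidableEq n]

theorem transpose_permMatrix_mulVec [NonAssocSemiring R] (σ : Equiv.Perm n) (v : n → R) :
    (σ.permMatrix R)ᵀ *ᵥ v = v ∘ σ.symm := by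
  rw [transpose_permMatrix, PEquiv.toMatrix_toPEquiv_mulVec, Equiv.Perm.inv_def]

theorem transpose_permMatrix_mul_mul_permMatrix [NonAssocSemiring R] (σ : Equiv.Perm n)
    (S : Matrix n n R) :
    (σ.permMatrix R)ᵀ * S * σ.permMatrix R = S.submatrix σ.symm σ.symm := by
  rw [transpose_permMatrix, PEquiv.toMatrix_toPEquiv_mul, PEquiv.mul_toMatrix_toPEquiv,
    submatrix_submatrix, Equiv.Perm.inv_def]
  rfl

theorem submatrix_equiv_pow [Semiring R] (S : Matrix n n R) (e : m ≃ n) (k : ℕ) :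
    S.submatrix e e ^ k = (S ^ k).submatrix e e :=
  (map_pow (reindexAlgEquiv ℕ R e.symm) S k).symm

theorem submatrix_equiv_pow_mulVec_comp [Semiring R] (S : Matrix n n R) (e : m ≃ n) (k : ℕ)
    (v : n → R) :
    S.submatrix e e ^ k *ᵥ (v ∘ e) = (S ^ k *ᵥ v) ∘ e := by
  rw [submatrix_equiv_pow, submatrix_mulVec_equiv, Function.comp_assoc, e.self_comp_symm,
    Function.comp_id]

theorem sum_smul_submatrix_equiv_pow_mulVec_comp [Semiring R] {K : ℕ} (S : Matrix n n R)
    (e : m ≃ n) (h : Fin (K + 1) → R) (v : n → R) :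
    ∑ k : Fin (K + 1), h k • (S.submatrix e e ^ (k : ℕ) *ᵥ (v ∘ e)) =
      (∑ k : Fin (K + 1), h k • (S ^ (k : ℕ) *ᵥ v)) ∘ e := by
  ext i
  simp only [submatrix_equiv_pow_mulVec_comp, Finset.sum_apply, Pi.smul_apply,
    Function.comp_apply]

end Matrix

theorem nbhd_submatrix {N : ℕ} (S : Matrix (Fin N) (Fin N) ℝ) (e : Equiv.Perm (Fin N)) (i : Fin N) :
    nbhd (S.submatrix e e) i = (nbhd S (e i)).map e.symm.toEmbedding := by
  ext j
  rw [Finset.mem_map_equiv, nbhd, nbhd, Finset.mem_filter_univ, Finset.mem_filter_univ,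
    Equiv.symm_symm, e.injective.ne_iff, submatrix_apply]

theorem Phi_submatrix {N K : ℕ} (S : Matrix (Fin N) (Fin N) ℝ) (hne : ∀ i, (nbhd S i).Nonempty)
    (e : Equiv.Perm (Fin N)) (hne' : ∀ i, (nbhd (S.submatrix e e) i).Nonempty)
    (h : Fin (K + 1) → ℝ) (β : ℝ) (hσ : Fin K → ℝ) (x : Fin N → ℝ) :
    Phi (S.submatrix e e) hne' h β hσ (x ∘ e) = Phi S hne h β hσ x ∘ e := by
  ext i
  simp only [Phi, Function.comp_apply]
  rw [sum_smul_submatrix_equiv_pow_mulVec_comp]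
  simp only [submatrix_equiv_pow_mulVec_comp, nbhd_submatrix, Finset.sup'_map,
    Function.comp_apply, Equiv.coe_toEmbedding, Equiv.apply_symm_apply]

theorem gcnn_graph_adaptive_max_perm_equivariant (N K : ℕ)
    (S : Matrix (Fin N) (Fin N) ℝ) (hne : ∀ i, (nbhd S i).Nonempty)
    (h : Fin (K + 1) → ℝ) (β : ℝ) (hσ : Fin K → ℝ)
    (σ : Equiv.Perm (Fin N)) (x : Fin N → ℝ)
    (hne' : ∀ i, (nbhd ((σ.permMatrix ℝ)ᵀ * S * (σ.permMatrix ℝ)) i).Nonempty) :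
    Phi ((σ.permMatrix ℝ)ᵀ * S * (σ.permMatrix ℝ)) hne' h β hσ ((σ.permMatrix ℝ)ᵀ *ᵥ x) =
      (σ.permMatrix ℝ)ᵀ *ᵥ Phi S hne h β hσ x := by
  have hconj := transpose_permMatrix_mul_mul_permMatrix σ S
  rw [transpose_permMatrix_mulVec, transpose_permMatrix_mulVec,
    ← Phi_submatrix S hne σ.symm (hconj ▸ hne')]
  congr
end
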